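/- Assume additionally that y* ∈ ℝ^m is the unique global minimizer of L (i.e. Argmin L = {y*}). Then y(t) → y* as t → ∞. -/

import Mathlib

open Filter MeasureTheory ProbabilityTheory
open scoped Topology NNReal

noncomputable def sigmaMin {E F : Type*} [NormedAddCommGroup E] [InnerProductSpace ℝ E]
    [CompleteSpace E] [NormedAddCommGroup F] [InnerProductSpace ℝ F] [CompleteSpace F]
    (A : E →L[ℝ] F) : ℝ :=
  ⨅ w : {w : F // ‖w‖ = 1}, ‖ContinuousLinearMap.adjoint A w.1‖

/-! Along the gradient flow `t ↦ f (θ t)` decreases at rate `‖∇f (θ t)‖²`. On `B̄(θ₀, R)` the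
Lipschitz bound keeps `σ_min (J_g)` above `σ₀ / 2`, and together with the restricted injectivity
of `J_F` this turns the KL inequality for `L` into one for `f = L ∘ F ∘ g` with desingularizer
`2ψ / (σ_F σ₀)`. The length of the trajectory on `[a, b]` is then bounded by the drop of
`2ψ(f (θ ·)) / (σ_F σ₀)`, so the trajectory never leaves `B̄(θ₀, R') ⊆ B̄(θ₀, R)`, has finite length
and converges to some `x`. A limit of a gradient flow is a critical point, so KL forces
`f x = 0`, and `F (g x) = y*` by uniqueness of the minimiser. If the loss vanishes in finite time,
`y(t)` lies in `Argmin L = {y*}` from then on. -/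

open ContinuousLinearMap Metric Set

section Adjoint

variable {E F : Type*} [NormedAddCommGroup E] [InnerProductSpace ℝ E] [CompleteSpace E]
  [NormedAddCommGroup F] [InnerProductSpace ℝ F] [CompleteSpace F]

theorem sigmaMin_mul_norm_le_norm_adjoint (A : E →L[ℝ] F) (w : F) :
    sigmaMin A * ‖w‖ ≤ ‖adjoint A w‖ := by
  rcases eq_or_ne w 0 with rfl | hw
  · simp
  have hw' : 0 < ‖w‖ := norm_pos_iff.2 hw
  have hunit : ‖‖w‖⁻¹ • w‖ = 1 := by
    rw [norm_smul, norm_inv, norm_norm, inv_mul_cancel₀ hw'.ne']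
  have hbdd : BddBelow (range fun v : {v : F // ‖v‖ = 1} => ‖adjoint A v.1‖) :=
    ⟨0, by rintro _ ⟨v, rfl⟩; exact norm_nonneg _⟩
  have h := ciInf_le hbdd ⟨_, hunit⟩
  rw [map_smul, norm_smul, norm_inv, norm_norm] at h
  rwa [← le_div_iff₀ hw', div_eq_inv_mul]

theorem sigmaMin_sub_norm_sub_mul_norm_le_norm_adjoint (A B : E →L[ℝ] F) (w : F) :
    (sigmaMin A - ‖A - B‖) * ‖w‖ ≤ ‖adjoint B w‖ := by
  have hA := sigmaMin_mul_norm_le_norm_adjoint A w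
  have hAB : ‖adjoint A w - adjoint B w‖ ≤ ‖A - B‖ * ‖w‖ := by
    rw [← sub_apply, ← map_sub, ← LinearIsometryEquiv.norm_map adjoint (A - B)]
    exact le_opNorm _ _
  have := norm_sub_norm_le (adjoint A w) (adjoint B w)
  rw [sub_mul]
  linarith

theorem half_mul_norm_le_norm_adjoint {X : Type*} [SeminormedAddCommGroup X]
    {J : X → E →L[ℝ] F} {x₀ x : X} {σ R : ℝ} (hσ : σ ≤ sigmaMin (J x₀)) (hσ₀ : 0 ≤ σ)
    (hJ : ∀ a ∈ closedBall x₀ R, ∀ b ∈ closedBall x₀ R, ‖J a - J b‖ ≤ σ / (2 * R) * ‖a - b‖)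
    (hx : x ∈ closedBall x₀ R) (w : F) :
    σ / 2 * ‖w‖ ≤ ‖adjoint (J x) w‖ := by
  have hd : ‖x₀ - x‖ ≤ R := by rw [← dist_eq_norm, dist_comm]; exact hx
  have hJx : ‖J x₀ - J x‖ ≤ σ / 2 :=
    calc ‖J x₀ - J x‖ ≤ σ / (2 * R) * ‖x₀ - x‖ :=
          hJ x₀ (mem_closedBall_self ((norm_nonneg _).trans hd)) x hx
      _ = σ / 2 * (‖x₀ - x‖ / R) := by ring
      _ ≤ σ / 2 := mul_le_of_le_one_right (by positivity)
          (div_le_one_of_le₀ hd ((norm_nonneg _).trans hd))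
  have := sigmaMin_sub_norm_sub_mul_norm_le_norm_adjoint (J x₀) (J x) w
  nlinarith [norm_nonneg w]

end Adjoint

section Gradient

variable {E F : Type*} [NormedAddCommGroup E] [InnerProductSpace ℝ E] [CompleteSpace E]
  [NormedAddCommGroup F] [InnerProductSpace ℝ F] [CompleteSpace F]

theorem gradient_comp_eq_adjoint {L : F → ℝ} {g : E → F} {x : E}
    (hL : DifferentiableAt ℝ L (g x)) (hg : DifferentiableAt ℝ g x) :
    gradient (fun y => L (g y)) x = adjoint (fderiv ℝ g x) (gradient L (g x)) :=
  ext_inner_right ℝ fun v => by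
    rw [inner_gradient_left, adjoint_inner_left, inner_gradient_left, fderiv_fun_comp x hL hg]
    rfl

theorem ContDiff.continuous_gradient {f : E → ℝ} (hf : ContDiff ℝ 1 f) :
    Continuous (gradient f) :=
  (InnerProductSpace.toDual ℝ E).symm.continuous.comp (hf.continuous_fderiv one_ne_zero)

end Gradient

theorem tendsto_atBot_of_hasDerivAt_le_neg {h h' : ℝ → ℝ} {a ε : ℝ} (hε : 0 < ε)
    (hh : ∀ t ≥ a, HasDerivAt h (h' t) t) (hh' : ∀ t ≥ a, h' t ≤ -ε) :
    Tendsto h atTop atBot := by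
  have hd : ∀ t ≥ a, HasDerivAt (fun t => h t + ε * t) (h' t + ε) t := fun t ht => by
    simpa using (hh t ht).fun_add ((hasDerivAt_id' t).const_mul ε)
  have hanti : AntitoneOn (fun t => h t + ε * t) (Ici a) := by
    refine antitoneOn_of_hasDerivWithinAt_nonpos (f' := fun t => h' t + ε) (convex_Ici a)
      (fun t ht => (hd t ht).continuousAt.continuousWithinAt) (fun t ht => ?_) (fun t ht => ?_)
    all_goals rw [interior_Ici] at ht
    · exact (hd t (le_of_lt ht)).hasDerivWithinAt
    · linarith [hh' t (le_of_lt ht)]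
  have hline : Tendsto (fun t => h a + ε * a + -ε * t) atTop atBot :=
    tendsto_atBot_add_const_left _ _ (tendsto_id.const_mul_atTop_of_neg (neg_neg_of_pos hε))
  refine tendsto_atBot_mono' atTop ?_ hline
  filter_upwards [eventually_ge_atTop a] with t ht
  have := hanti self_mem_Ici ht ht
  linarith

theorem norm_sub_le_sub_of_norm_deriv_le {E : Type*} [NormedAddCommGroup E] [NormedSpace ℝ E]
    {γ γ' : ℝ → E} {V V' : ℝ → ℝ} {a b : ℝ} (hab : a ≤ b)
    (hγ : ∀ t ∈ Icc a b, HasDerivAt γ (γ' t) t) (hV : ∀ t ∈ Icc a b, HasDerivAt V (V' t) t)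
    (hbound : ∀ t ∈ Ico a b, ‖γ' t‖ ≤ -V' t) :
    ‖γ b - γ a‖ ≤ V a - V b := by
  refine image_norm_le_of_norm_deriv_right_le_deriv_boundary' (f := fun t => γ t - γ a)
    (B := fun t => V a - V t) (B' := fun t => -V' t)
    (fun t ht => ((hγ t ht).sub_const _).continuousAt.continuousWithinAt)
    (fun t ht => ((hγ t (Ico_subset_Icc_self ht)).sub_const _).hasDerivWithinAt)
    (by simp) (fun t ht => ((hV t ht).const_sub _).continuousAt.continuousWithinAt)
    (fun t ht => ((hV t (Ico_subset_Icc_self ht)).const_sub _).hasDerivWithinAt) hbound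
    (right_mem_Icc.2 hab)

theorem ContinuousOn.forall_mem_closedBall_of_bootstrap {X : Type*} [PseudoMetricSpace X]
    {γ : ℝ → X} {r R : ℝ} (hγ : ContinuousOn γ (Ici 0)) (hr : 0 ≤ r) (hrR : r < R)
    (h : ∀ t ≥ 0, (∀ s ∈ Icc 0 t, γ s ∈ closedBall (γ 0) R) → γ t ∈ closedBall (γ 0) r) :
    ∀ t ≥ 0, γ t ∈ closedBall (γ 0) r := by
  intro T hT
  by_contra hT'
  set B := Icc 0 T ∩ (fun s => dist (γ s) (γ 0)) ⁻¹' Ici R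
  have hBc : IsCompact B := isCompact_Icc.of_isClosed_subset
    (((continuous_id.dist continuous_const).comp_continuousOn
      (hγ.mono Icc_subset_Ici_self)).preimage_isClosed_of_isClosed isClosed_Icc isClosed_Ici)
    inter_subset_left
  have hBne : B.Nonempty := by
    by_contra hB
    refine hT' (h T hT fun s hs => mem_closedBall.2 (le_of_lt (not_le.1 fun hR => hB ⟨s, hs, hR⟩)))
  -- `τ` is the first time at which `γ` reaches distance `R` from `γ 0`
  obtain ⟨τ, ⟨hτT, hτR⟩, hτmin⟩ := hBc.exists_isLeast hBne
  have hbefore : MapsTo γ (Ico 0 τ) (closedBall (γ 0) R) := fun s hs =>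
    mem_closedBall.2 (le_of_lt (not_le.1 fun hR =>
      (hτmin ⟨⟨hs.1, hs.2.le.trans hτT.2⟩, hR⟩).not_gt hs.2))
  have hτ : γ τ ∈ closedBall (γ 0) R := by
    rcases eq_or_lt_of_le hτT.1 with h0 | h0
    · rw [← h0]; exact mem_closedBall_self (hr.trans hrR.le)
    · refine closure_minimal hbefore.image_subset isClosed_closedBall
        ((hγ τ hτT.1).mono Ico_subset_Ici_self |>.mem_closure_image ?_)
      rw [closure_Ico h0.ne]; exact right_mem_Icc.2 h0.le
  have := mem_closedBall.1 (h τ hτT.1 fun s hs =>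
    (eq_or_lt_of_le hs.2).elim (fun he => he ▸ hτ) fun hlt => hbefore ⟨hs.1, hlt⟩)
  exact absurd hτR (not_le.2 (this.trans_lt hrR))

theorem exists_tendsto_of_dist_le_sub {X : Type*} [PseudoMetricSpace X] [CompleteSpace X]
    {γ : ℝ → X} {V : ℝ → ℝ} (hV : ∀ t ≥ 0, 0 ≤ V t)
    (hγ : ∀ a b, 0 ≤ a → a ≤ b → dist (γ a) (γ b) ≤ V a - V b) :
    ∃ x, Tendsto γ atTop (𝓝 x) := by
  have hbdd : BddBelow (V '' Ici 0) := ⟨0, by rintro _ ⟨t, ht, rfl⟩; exact hV t ht⟩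
  refine cauchySeq_tendsto_of_complete (Metric.cauchySeq_iff'.2 fun ε hε => ?_)
  obtain ⟨_, ⟨N, hN, rfl⟩, hNε⟩ := exists_lt_of_csInf_lt (nonempty_Ici.image V)
    (lt_add_of_pos_right (sInf (V '' Ici 0)) hε)
  refine ⟨N, fun t ht => ?_⟩
  have hinf := csInf_le hbdd ⟨t, mem_Ici.2 ((mem_Ici.1 hN).trans ht), rfl⟩
  rw [dist_comm]
  linarith [hγ N t hN ht]

section GradientFlow

variable {E : Type*} [NormedAddCommGroup E] [InnerProductSpace ℝ E] [CompleteSpace E]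
  {f : E → ℝ} {θ : ℝ → E}

theorem hasDerivAt_comp_of_gradientFlow {t : ℝ} (hf : DifferentiableAt ℝ f (θ t))
    (hθ : HasDerivAt θ (-gradient f (θ t)) t) :
    HasDerivAt (fun s => f (θ s)) (-‖gradient f (θ t)‖ ^ 2) t := by
  refine (hf.hasFDerivAt.comp_hasDerivAt t hθ).congr_deriv ?_
  rw [map_neg, ← inner_gradient_left, real_inner_self_eq_norm_sq]

theorem antitoneOn_comp_of_gradientFlow (hf : Differentiable ℝ f)
    (hθ : ∀ t ≥ 0, HasDerivAt θ (-gradient f (θ t)) t) :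
    AntitoneOn (fun t => f (θ t)) (Ici 0) := by
  refine antitoneOn_of_hasDerivWithinAt_nonpos (f' := fun t => -‖gradient f (θ t)‖ ^ 2)
    (convex_Ici 0)
    (fun t ht => (hasDerivAt_comp_of_gradientFlow (hf _) (hθ t ht)).continuousAt.continuousWithinAt)
    (fun t ht => ?_) (fun t _ => neg_nonpos.2 (sq_nonneg _))
  rw [interior_Ici] at ht
  exact (hasDerivAt_comp_of_gradientFlow (hf _) (hθ t (le_of_lt ht))).hasDerivWithinAt

theorem gradient_eq_zero_of_tendsto (hf : Differentiable ℝ f) {x : E}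
    (hgf : ContinuousAt (gradient f) x) (hθ : ∀ t ≥ 0, HasDerivAt θ (-gradient f (θ t)) t)
    (hx : Tendsto θ atTop (𝓝 x)) : gradient f x = 0 := by
  -- otherwise `f ∘ θ` eventually decreases at a fixed positive rate and cannot converge
  by_contra hne
  have hpos : 0 < ‖gradient f x‖ ^ 2 := by have := norm_pos_iff.2 hne; positivity
  have hlim : Tendsto (fun t => ‖gradient f (θ t)‖ ^ 2) atTop (𝓝 (‖gradient f x‖ ^ 2)) :=
    ((hgf.norm.pow 2).tendsto).comp hx
  obtain ⟨a, ha⟩ := eventually_atTop.1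
    ((hlim.eventually (eventually_gt_nhds (half_lt_self hpos))).and
      (eventually_ge_atTop 0))
  have hbot := tendsto_atBot_of_hasDerivAt_le_neg (half_pos hpos)
    (fun t ht => hasDerivAt_comp_of_gradientFlow (hf _) (hθ t (ha t ht).2))
    (fun t ht => by linarith [(ha t ht).1])
  exact not_tendsto_atBot_of_tendsto_nhds ((hf x).continuousAt.tendsto.comp hx) hbot

end GradientFlow

section KurdykaLojasiewicz

variable {E F G : Type*} [NormedAddCommGroup E] [InnerProductSpace ℝ E] [CompleteSpace E]
  [NormedAddCommGroup F] [InnerProductSpace ℝ F] [CompleteSpace F]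
  [NormedAddCommGroup G] [InnerProductSpace ℝ G] [CompleteSpace G]

def KLInequalityOn (f : E → ℝ) (φ' : ℝ → ℝ) (r₀ : ℝ) (S : Set E) : Prop :=
  ∀ q ∈ S, 0 < f q → f q < r₀ → 1 ≤ φ' (f q) * ‖gradient f q‖

variable {f : E → ℝ} {θ : ℝ → E} {φ φ' : ℝ → ℝ} {r₀ : ℝ}

theorem KLInequalityOn.comp {L : G → ℝ} {h : F → G} {g : E → F} {S : Set E}
    (hKL : KLInequalityOn L φ' r₀ univ) (hL : Differentiable ℝ L) (hh : Differentiable ℝ h)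
    (hg : Differentiable ℝ g) {a b : ℝ} (ha : 0 < a) (hb : 0 < b)
    (hg' : ∀ x ∈ S, ∀ w, a * ‖w‖ ≤ ‖adjoint (fderiv ℝ g x) w‖)
    (hh' : ∀ x ∈ S,
      b * ‖gradient L (h (g x))‖ ≤ ‖adjoint (fderiv ℝ h (g x)) (gradient L (h (g x)))‖) :
    KLInequalityOn (fun x => L (h (g x))) (fun s => φ' s / (a * b)) r₀ S := by
  intro x hx h0 hr₀
  have hKLx := hKL _ (mem_univ _) h0 hr₀
  have hφ' : 0 ≤ φ' (L (h (g x))) := by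
    by_contra! hneg
    nlinarith [norm_nonneg (gradient L (h (g x)))]
  rw [gradient_comp_eq_adjoint (L := fun z => L (h z)) ((hL _).comp _ (hh _)) (hg x),
    gradient_comp_eq_adjoint (hL _) (hh _)]
  calc 1 ≤ φ' (L (h (g x))) * ‖gradient L (h (g x))‖ := hKLx
    _ = φ' (L (h (g x))) / (a * b) * (a * (b * ‖gradient L (h (g x))‖)) := by field_simp
    _ ≤ φ' (L (h (g x))) / (a * b) * ‖adjoint (fderiv ℝ g x)
          (adjoint (fderiv ℝ h (g x)) (gradient L (h (g x))))‖ := by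
      gcongr
      exact (mul_le_mul_of_nonneg_left (hh' x hx) ha.le).trans (hg' x hx _)

theorem dist_le_sub_of_KL {S : Set E} (hf : Differentiable ℝ f)
    (hθ : ∀ t ≥ 0, HasDerivAt θ (-gradient f (θ t)) t)
    (hφ : ∀ s ∈ Ioo 0 r₀, HasDerivAt φ (φ' s) s)
    (hKL : KLInequalityOn f φ' r₀ S)
    (hval : ∀ t ≥ 0, f (θ t) ∈ Ioo 0 r₀) {a b : ℝ} (ha : 0 ≤ a) (hab : a ≤ b)
    (hS : ∀ t ∈ Icc a b, θ t ∈ S) :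
    dist (θ a) (θ b) ≤ φ (f (θ a)) - φ (f (θ b)) := by
  rw [dist_comm, dist_eq_norm]
  refine norm_sub_le_sub_of_norm_deriv_le hab (fun t ht => hθ t (ha.trans ht.1))
    (fun t ht => (hφ _ (hval t (ha.trans ht.1))).comp t
      (hasDerivAt_comp_of_gradientFlow (hf _) (hθ t (ha.trans ht.1)))) fun t ht => ?_
  have hKLt := hKL _ (hS t (Ico_subset_Icc_self ht)) (hval t (ha.trans ht.1)).1
    (hval t (ha.trans ht.1)).2
  rw [norm_neg, mul_neg, neg_neg, pow_two, ← mul_assoc]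
  exact le_mul_of_one_le_left (norm_nonneg _) hKLt

theorem exists_tendsto_zero_of_KL {R : ℝ} (hf : Differentiable ℝ f)
    (hgf : Continuous (gradient f)) (hθ : ∀ t ≥ 0, HasDerivAt θ (-gradient f (θ t)) t)
    (hpos : ∀ t ≥ 0, 0 < f (θ t)) (hr₀ : f (θ 0) < r₀)
    (hφ : ∀ s ∈ Ioo 0 r₀, HasDerivAt φ (φ' s) s) (hφ_nonneg : ∀ s ∈ Ioo 0 r₀, 0 ≤ φ s)
    (hKL : KLInequalityOn f φ' r₀ (closedBall (θ 0) R))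
    (hR : φ (f (θ 0)) < R) :
    ∃ x, Tendsto θ atTop (𝓝 x) ∧ f x = 0 := by
  have hanti := antitoneOn_comp_of_gradientFlow hf hθ
  have hle : ∀ t ≥ 0, f (θ t) ≤ f (θ 0) := fun t ht => hanti self_mem_Ici ht ht
  have hval : ∀ t ≥ 0, f (θ t) ∈ Ioo 0 r₀ := fun t ht => ⟨hpos t ht, (hle t ht).trans_lt hr₀⟩
  have hlen : ∀ a b, 0 ≤ a → a ≤ b → (∀ t ∈ Icc a b, θ t ∈ closedBall (θ 0) R) →
      dist (θ a) (θ b) ≤ φ (f (θ a)) - φ (f (θ b)) :=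
    fun a b => dist_le_sub_of_KL hf hθ hφ hKL hval
  have htrap : ∀ t ≥ 0, θ t ∈ closedBall (θ 0) R := by
    refine fun t ht => closedBall_subset_closedBall hR.le
      (ContinuousOn.forall_mem_closedBall_of_bootstrap
        (fun t ht => (hθ t ht).continuousAt.continuousWithinAt) (hφ_nonneg _ (hval 0 le_rfl)) hR
        (fun t ht hS => ?_) t ht)
    rw [mem_closedBall, dist_comm]
    linarith [hlen 0 t le_rfl ht hS, hφ_nonneg _ (hval t ht)]
  obtain ⟨x, hx⟩ := exists_tendsto_of_dist_le_sub (fun t ht => hφ_nonneg _ (hval t ht))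
    fun a b ha hab => hlen a b ha hab fun t ht => htrap t (ha.trans ht.1)
  refine ⟨x, hx, ?_⟩
  have hfx : Tendsto (fun t => f (θ t)) atTop (𝓝 (f x)) := (hf x).continuousAt.tendsto.comp hx
  have hx0 : 0 ≤ f x := ge_of_tendsto hfx (eventually_atTop.2 ⟨0, fun t ht => (hpos t ht).le⟩)
  have hxr₀ : f x < r₀ := (le_of_tendsto hfx (eventually_atTop.2 ⟨0, hle⟩)).trans_lt hr₀
  have hxR : x ∈ closedBall (θ 0) R :=
    isClosed_closedBall.mem_of_tendsto hx (eventually_atTop.2 ⟨0, htrap⟩)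
  by_contra hne
  have := hKL x hxR (hx0.lt_of_ne' hne) hxr₀
  rw [gradient_eq_zero_of_tendsto hf hgf.continuousAt hθ hx, norm_zero, mul_zero] at this
  exact absurd this zero_lt_one.not_ge

end KurdykaLojasiewicz

theorem stmt6_general
    {n m p : ℕ}
    (L : EuclideanSpace ℝ (Fin m) → ℝ)
    (F : EuclideanSpace ℝ (Fin n) → EuclideanSpace ℝ (Fin m))
    (g : EuclideanSpace ℝ (Fin p) → EuclideanSpace ℝ (Fin n))
    (hL : ContDiff ℝ 1 L)
    (hLnonneg : ∀ v, 0 ≤ L v)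
    (hF : ContDiff ℝ 1 F)
    (hg : ContDiff ℝ 1 g)
    (θ θ' : ℝ → EuclideanSpace ℝ (Fin p)) (θ₀ : EuclideanSpace ℝ (Fin p))
    (hθ0 : θ 0 = θ₀)
    (hθd : ∀ t ≥ (0:ℝ), HasDerivAt θ (θ' t) t)
    (hflow : ∀ t ≥ (0:ℝ), θ' t = -gradient (fun q => L (F (g q))) (θ t))
    (r₀ : ℝ) (hr₀ : L (F (g (θ 0))) < r₀)
    (ψ ψ' : ℝ → ℝ) (hψ0 : ψ 0 = 0)
    (hψmono : StrictMonoOn ψ (Set.Ico 0 r₀))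
    (hψd : ∀ s ∈ Set.Ioo (0:ℝ) r₀, HasDerivAt ψ (ψ' s) s)
    (hKL : ∀ v : EuclideanSpace ℝ (Fin m), 0 < L v → L v < r₀ →
      1 ≤ ψ' (L v) * ‖gradient L v‖)
    (σF : ℝ) (hσF : 0 < σF)
    (σ₀ : ℝ) (hσ₀ : σ₀ = sigmaMin (fderiv ℝ g θ₀)) (hσ₀pos : 0 < σ₀)
    (R : ℝ)
    (hinj : ∀ q ∈ Metric.closedBall θ₀ R,
      gradient L (F (g q)) ∈ LinearMap.range (fderiv ℝ F (g q) : EuclideanSpace ℝ (Fin n) →ₗ[ℝ] EuclideanSpace ℝ (Fin m)) ∧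
      ∀ z ∈ LinearMap.range (fderiv ℝ F (g q) : EuclideanSpace ℝ (Fin n) →ₗ[ℝ] EuclideanSpace ℝ (Fin m)),
        σF * ‖z‖ ≤ ‖ContinuousLinearMap.adjoint (fderiv ℝ F (g q)) z‖)
    (hLip : ∀ a ∈ Metric.closedBall θ₀ R, ∀ b ∈ Metric.closedBall θ₀ R,
      ‖fderiv ℝ g a - fderiv ℝ g b‖ ≤ σ₀ / (2 * R) * ‖a - b‖)
    (R' : ℝ) (hRdef : R' = 2 / (σF * σ₀) * ψ (L (F (g θ₀)))) (hRR : R' < R)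
    (ystar : EuclideanSpace ℝ (Fin m))
    (hargmin : {v : EuclideanSpace ℝ (Fin m) | ∀ w, L v ≤ L w} = {ystar}) :
    Tendsto (fun t => F (g (θ t))) atTop (𝓝 ystar) := by
  subst hθ0
  set f := fun q => L (F (g q))
  have hfC : ContDiff ℝ 1 f := hL.comp (hF.comp hg)
  have hfd : Differentiable ℝ f := hfC.differentiable one_ne_zero
  have hθ : ∀ t ≥ 0, HasDerivAt θ (-gradient f (θ t)) t := fun t ht => hflow t ht ▸ hθd t ht
  have hminimizer : ∀ v, L v = 0 → v = ystar := fun v hv =>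
    hargmin.subset fun w => hv ▸ hLnonneg w
  by_cases hzero : ∃ t ≥ 0, f (θ t) = 0
  · obtain ⟨t₀, ht₀, hft₀⟩ := hzero
    refine tendsto_const_nhds.congr' ?_
    filter_upwards [eventually_ge_atTop t₀] with t ht
    refine (hminimizer _ (le_antisymm ?_ (hLnonneg _))).symm
    exact hft₀ ▸ antitoneOn_comp_of_gradientFlow hfd hθ ht₀
      (ht₀.trans ht) ht
  push Not at hzero
  set c := σ₀ / 2 * σF
  have hc : 0 < c := by positivity
  have hψ_nonneg : ∀ s ∈ Ioo 0 r₀, 0 ≤ ψ s := fun s hs =>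
    hψ0 ▸ (hψmono ⟨le_rfl, hs.1.trans hs.2⟩ (Ioo_subset_Ico_self hs) hs.1).le
  have hKLf : KLInequalityOn f (fun s => ψ' s / c) r₀ (closedBall (θ 0) R) :=
    KLInequalityOn.comp (fun v _ => hKL v) (hL.differentiable one_ne_zero)
      (hF.differentiable one_ne_zero) (hg.differentiable one_ne_zero) (half_pos hσ₀pos) hσF
      (fun q hq => half_mul_norm_le_norm_adjoint hσ₀.le hσ₀pos.le hLip hq)
      (fun q hq => (hinj q hq).2 _ (hinj q hq).1)
  have hR : ψ (f (θ 0)) / c < R := by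
    rw [hRdef] at hRR
    convert hRR using 1
    ring
  obtain ⟨x, hx, hfx⟩ := exists_tendsto_zero_of_KL hfd hfC.continuous_gradient hθ
    (fun t ht => (hLnonneg _).lt_of_ne' (hzero t ht)) hr₀
    (fun s hs => (hψd s hs).div_const c) (fun s hs => div_nonneg (hψ_nonneg s hs) hc.le) hKLf hR
  rw [← hminimizer _ hfx]
  exact ((hF.continuous.comp hg.continuous).tendsto x).comp hx

theorem stmt6
    {n m p : ℕ} (hn : 0 < n) (hm : 0 < m) (hp : 0 < p)
    (L : EuclideanSpace ℝ (Fin m) → ℝ)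
    (F : EuclideanSpace ℝ (Fin n) → EuclideanSpace ℝ (Fin m))
    (g : EuclideanSpace ℝ (Fin p) → EuclideanSpace ℝ (Fin n))
    (hL : ContDiff ℝ 1 L)
    (hLnonneg : ∀ v, 0 ≤ L v) (hLmin : ∃ v, L v = 0)
    (hLgrad : ∀ s : Set (EuclideanSpace ℝ (Fin m)), Bornology.IsBounded s →
      ∃ K : ℝ≥0, LipschitzOnWith K (fun v => gradient L v) s)
    (hF : ContDiff ℝ 1 F)
    (hJF : ∀ s : Set (EuclideanSpace ℝ (Fin n)), Bornology.IsBounded s →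
      ∃ K : ℝ≥0, LipschitzOnWith K (fun x => fderiv ℝ F x) s)
    (hg : ContDiff ℝ 1 g)
    (hJg : ∀ s : Set (EuclideanSpace ℝ (Fin p)), Bornology.IsBounded s →
      ∃ K : ℝ≥0, LipschitzOnWith K (fun q => fderiv ℝ g q) s)
    (θ θ' : ℝ → EuclideanSpace ℝ (Fin p)) (θ₀ : EuclideanSpace ℝ (Fin p))
    (hθ0 : θ 0 = θ₀)
    (hθd : ∀ t ≥ (0:ℝ), HasDerivAt θ (θ' t) t)
    (hθcont : ContinuousOn θ' (Set.Ici 0))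
    (hflow : ∀ t ≥ (0:ℝ), θ' t = -gradient (fun q => L (F (g q))) (θ t))
    (r₀ : ℝ) (hr₀ : L (F (g (θ 0))) < r₀)
    (ψ ψ' : ℝ → ℝ) (hψ0 : ψ 0 = 0)
    (hψcont : ContinuousOn ψ (Set.Ico 0 r₀))
    (hψmono : StrictMonoOn ψ (Set.Ico 0 r₀))
    (hψd : ∀ s ∈ Set.Ioo (0:ℝ) r₀, HasDerivAt ψ (ψ' s) s)
    (hKL : ∀ v : EuclideanSpace ℝ (Fin m), 0 < L v → L v < r₀ →
      1 ≤ ψ' (L v) * ‖gradient L v‖)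
    (σF : ℝ) (hσF : 0 < σF)
    (σ₀ : ℝ) (hσ₀ : σ₀ = sigmaMin (fderiv ℝ g θ₀)) (hσ₀pos : 0 < σ₀)
    (R : ℝ) (hRpos : 0 < R)
    (hinj : ∀ q ∈ Metric.closedBall θ₀ R,
      gradient L (F (g q)) ∈ LinearMap.range (fderiv ℝ F (g q) : EuclideanSpace ℝ (Fin n) →ₗ[ℝ] EuclideanSpace ℝ (Fin m)) ∧
      ∀ z ∈ LinearMap.range (fderiv ℝ F (g q) : EuclideanSpace ℝ (Fin n) →ₗ[ℝ] EuclideanSpace ℝ (Fin m)),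
        σF * ‖z‖ ≤ ‖ContinuousLinearMap.adjoint (fderiv ℝ F (g q)) z‖)
    (hLip : ∀ a ∈ Metric.closedBall θ₀ R, ∀ b ∈ Metric.closedBall θ₀ R,
      ‖fderiv ℝ g a - fderiv ℝ g b‖ ≤ σ₀ / (2 * R) * ‖a - b‖)
    (R' : ℝ) (hRdef : R' = 2 / (σF * σ₀) * ψ (L (F (g θ₀)))) (hRR : R' < R)
    (ystar : EuclideanSpace ℝ (Fin m))
    (hargmin : {v : EuclideanSpace ℝ (Fin m) | ∀ w, L v ≤ L w} = {ystar}) :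
    Tendsto (fun t => F (g (θ t))) atTop (𝓝 ystar) :=
  stmt6_general L F g hL hLnonneg hF hg θ θ' θ₀ hθ0 hθd hflow r₀ hr₀ ψ ψ' hψ0 hψmono hψd hKL σF hσF
    σ₀ hσ₀ hσ₀pos R hinj hLip R' hRdef hRR ystar hargmin
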